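/- Under Assumptions IV and weak monotonicity, if additionally E[Z_R | X] is linear in X, the reordered IV estimand satisfies β_RIV = E[π(X)·Var[Z|X]·τ(X)] / E[π(X)·Var[Z|X]], a convex combination of the conditional LATEs. (Theorem 3.) -/

import Mathlib

open Finset

section Defs

variable {Ω 𝓧 : Type*} [Fintype Ω]

/-- Expectation of `f` under weights `p` on a finite outcome space. -/
noncomputable def pexp (p : Ω → ℝ) (f : Ω → ℝ) : ℝ := ∑ ω, p ω * f ω

open Classical in
/-- Probability of the event `A` under weights `p`. -/
noncomputable def pprob (p : Ω → ℝ) (A : Ω → Prop) : ℝ := ∑ ω, if A ω then p ω else 0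

open Classical in
/-- Conditional expectation of `f` given the event `A`. -/
noncomputable def eexp (p : Ω → ℝ) (A : Ω → Prop) (f : Ω → ℝ) : ℝ :=
  (∑ ω, if A ω then p ω * f ω else 0) / pprob p A

/-- Conditional probability of `A` given `B`. -/
noncomputable def cprob (p : Ω → ℝ) (A B : Ω → Prop) : ℝ :=
  pprob p (fun ω => A ω ∧ B ω) / pprob p B

/-- `p` is a probability vector. -/
def IsProb (p : Ω → ℝ) : Prop := (∀ ω, 0 ≤ p ω) ∧ ∑ ω, p ω = 1

/-- Conditional expectation of `f` given `X = x`. -/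
noncomputable def condMean (p : Ω → ℝ) (X : Ω → 𝓧) (f : Ω → ℝ) (x : 𝓧) : ℝ :=
  eexp p (fun ω => X ω = x) f

/-- Conditional expectation of `f` given `X = x` and `Z = z`. -/
noncomputable def condMeanOn (p : Ω → ℝ) (X : Ω → 𝓧) (Z : Ω → ℝ) (f : Ω → ℝ) (x : 𝓧) (z : ℝ) : ℝ :=
  eexp p (fun ω => X ω = x ∧ Z ω = z) f

/-- Conditional cslope coefficient `E[f | Z=1, X=x] - E[f | Z=0, X=x]`. -/
noncomputable def cslope (p : Ω → ℝ) (X : Ω → 𝓧) (Z : Ω → ℝ) (f : Ω → ℝ) (x : 𝓧) : ℝ :=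
  condMeanOn p X Z f x 1 - condMeanOn p X Z f x 0

/-- Conditional variance of `f` given the event `A`. -/
noncomputable def evVar (p : Ω → ℝ) (A : Ω → Prop) (f : Ω → ℝ) : ℝ :=
  eexp p A (fun ω => (f ω - eexp p A f) ^ 2)

/-- Conditional variance of `f` given `X = x`. -/
noncomputable def condVar (p : Ω → ℝ) (X : Ω → 𝓧) (f : Ω → ℝ) (x : 𝓧) : ℝ :=
  evVar p (fun ω => X ω = x) f

end Defs

/-!
On a covariate cell `X = x` the reordered instrument is `Z` or `1 - Z`, according to the sign `s`
of the first stage, so `Cov(Z_R, f | x) = s · Var(Z | x) · (E[f | Z = 1, x] - E[f | Z = 0, x])`.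
Conditional independence turns this difference into `E[f(D(1), Y(1)) - f(D(0), Y(0)) | x]`, and
monotonicity makes `D(1) - D(0) = s · 1[D(1) ≠ D(0)]` with the same sign `s`; as `s² = 1`, the
covariances with `D` and `Y` are `π(x) Var(Z | x)` and `π(x) Var(Z | x) τ(x)`.
Linearity of `E[Z_R | X]` makes `Z_R - X α_R` orthogonal to every function of `X`, so by
Frisch–Waugh–Lovell both regression coefficients are `E[(Z_R - X α_R) f] / E[(Z_R - X α_R)²]`,
and averaging the cell identities over `X` gives the ratio.
-/

section RestrictedExpectation

variable {Ω : Type*} [Fintype Ω] (p : Ω → ℝ)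

open Classical in
/-- `E[f; A]`, with the same classical decidability instance as `eexp`, so that
`eexp p A f = pexpOn p A f / pprob p A` holds by `rfl`. -/
noncomputable def pexpOn (A : Ω → Prop) (f : Ω → ℝ) : ℝ := ∑ ω, if A ω then p ω * f ω else 0

variable {p}

lemma pexpOn_congr {A : Ω → Prop} {f g : Ω → ℝ} (h : ∀ ω, A ω → p ω ≠ 0 → f ω = g ω) :
    pexpOn p A f = pexpOn p A g := by
  unfold pexpOn
  refine Finset.sum_congr rfl fun ω _ => ?_
  by_cases hA : A ω
  · by_cases hp : p ω = 0
    · simp [hp]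
    · simp [hA, h ω hA hp]
  · simp [hA]

lemma pexpOn_const (A : Ω → Prop) (c : ℝ) : pexpOn p A (fun _ => c) = c * pprob p A := by
  simp only [pexpOn, pprob, Finset.mul_sum, mul_ite, mul_zero, mul_comm]

lemma pexpOn_eq_zero_of_pprob_eq_zero (hp0 : ∀ ω, 0 ≤ p ω) {A : Ω → Prop}
    (hA : pprob p A = 0) (f : Ω → ℝ) : pexpOn p A f = 0 := by
  classical
  have hzero := (Finset.sum_eq_zero_iff_of_nonneg fun ω _ => by
    split_ifs <;> simp [hp0 ω, *]).mp hA
  refine Finset.sum_eq_zero fun ω hω => ?_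
  have := hzero ω hω
  split_ifs at this ⊢ <;> simp_all

lemma pprob_nonneg (hp0 : ∀ ω, 0 ≤ p ω) (A : Ω → Prop) : 0 ≤ pprob p A :=
  Finset.sum_nonneg fun ω _ => by split_ifs <;> simp [hp0 ω]

lemma pprob_pos_of_pos (hp0 : ∀ ω, 0 ≤ p ω) {A : Ω → Prop} {ω : Ω} (hA : A ω)
    (hω : 0 < p ω) : 0 < pprob p A := by
  classical
  refine lt_of_lt_of_le ?_ (Finset.single_le_sum (f := fun ω => if A ω then p ω else 0)
    (fun ω _ => by split_ifs <;> simp [hp0 ω]) (Finset.mem_univ ω))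
  simpa [hA] using hω

lemma pexpOn_eq_sum_fiber {β : Type*} [DecidableEq β] (V : Ω → β) (A : Ω → Prop) (f : Ω → ℝ) :
    pexpOn p A f = ∑ v ∈ Finset.univ.image V, pexpOn p (fun ω => A ω ∧ V ω = v) f := by
  classical
  unfold pexpOn
  rw [← Finset.sum_fiberwise_of_maps_to (g := V) (t := Finset.univ.image V)
    fun ω _ => Finset.mem_image_of_mem V (Finset.mem_univ ω)]
  refine Finset.sum_congr rfl fun v _ => ?_
  rw [Finset.sum_filter]
  refine Finset.sum_congr rfl fun ω _ => ?_
  by_cases hv : V ω = v <;> simp [hv]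

lemma pexp_eq_sum_fiber {𝓧 : Type*} [DecidableEq 𝓧] (X : Ω → 𝓧) (f : Ω → ℝ) :
    pexp p f = ∑ x ∈ Finset.univ.image X, pexpOn p (fun ω => X ω = x) f := by
  have h := pexpOn_eq_sum_fiber (p := p) X (fun _ => True) f
  simp only [true_and] at h
  rw [← h]
  simp [pexp, pexpOn]

lemma pexpOn_split {A : Ω → Prop} {Z : Ω → ℝ} (hZ : ∀ ω, A ω → Z ω = 0 ∨ Z ω = 1)
    (g : ℝ → ℝ) (f : Ω → ℝ) :
    pexpOn p A (fun ω => g (Z ω) * f ω)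
      = g 1 * pexpOn p (fun ω => A ω ∧ Z ω = 1) f + g 0 * pexpOn p (fun ω => A ω ∧ Z ω = 0) f := by
  unfold pexpOn
  rw [Finset.mul_sum, Finset.mul_sum, ← Finset.sum_add_distrib]
  refine Finset.sum_congr rfl fun ω _ => ?_
  by_cases hA : A ω
  · rcases hZ ω hA with h | h <;> simp [hA, h] <;> ring
  · simp [hA]

end RestrictedExpectation

section ConditionalExpectation

variable {Ω : Type*} [Fintype Ω] {p : Ω → ℝ} {A : Ω → Prop}

lemma eexp_eq_pexpOn_div (A : Ω → Prop) (f : Ω → ℝ) : eexp p A f = pexpOn p A f / pprob p A :=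
  rfl

lemma eexp_congr {f g : Ω → ℝ} (h : ∀ ω, A ω → p ω ≠ 0 → f ω = g ω) :
    eexp p A f = eexp p A g := by
  rw [eexp_eq_pexpOn_div, eexp_eq_pexpOn_div, pexpOn_congr h]

lemma eexp_const (hA : pprob p A ≠ 0) (c : ℝ) : eexp p A (fun _ => c) = c := by
  rw [eexp_eq_pexpOn_div, pexpOn_const, mul_div_cancel_right₀ _ hA]

lemma eexp_add (f g : Ω → ℝ) :
    eexp p A (fun ω => f ω + g ω) = eexp p A f + eexp p A g := by
  simp only [eexp_eq_pexpOn_div, pexpOn, ← add_div, ← Finset.sum_add_distrib]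
  congr 1
  exact Finset.sum_congr rfl fun ω _ => by split_ifs <;> ring

lemma eexp_const_mul (c : ℝ) (f : Ω → ℝ) :
    eexp p A (fun ω => c * f ω) = c * eexp p A f := by
  rw [eexp_eq_pexpOn_div, eexp_eq_pexpOn_div, ← mul_div_assoc, pexpOn, pexpOn, Finset.mul_sum]
  congr 1
  exact Finset.sum_congr rfl fun ω _ => by split_ifs <;> ring

lemma eexp_sub (f g : Ω → ℝ) :
    eexp p A (fun ω => f ω - g ω) = eexp p A f - eexp p A g := by
  simp only [sub_eq_add_neg, ← neg_one_mul (g _), eexp_add, eexp_const_mul]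
  ring

lemma eexp_affine (hA : pprob p A ≠ 0) (a b : ℝ) (f : Ω → ℝ) :
    eexp p A (fun ω => a + b * f ω) = a + b * eexp p A f := by
  rw [eexp_add (fun _ => a), eexp_const hA, eexp_const_mul]

lemma eexp_ite_eq_cprob_mul (B : Ω → Prop) [DecidablePred B]
    (hBA : pprob p (fun ω => B ω ∧ A ω) ≠ 0) (g : Ω → ℝ) :
    eexp p A (fun ω => if B ω then g ω else 0)
      = cprob p B A * eexp p (fun ω => B ω ∧ A ω) g := by
  have hsum : pexpOn p A (fun ω => if B ω then g ω else 0) = pexpOn p (fun ω => B ω ∧ A ω) g := by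
    unfold pexpOn
    exact Finset.sum_congr rfl fun ω _ => by by_cases hB : B ω <;> by_cases hA : A ω <;> simp [*]
  rw [eexp_eq_pexpOn_div, eexp_eq_pexpOn_div, hsum, cprob]
  field_simp

def CondIndep {β γ : Type*} (p : Ω → ℝ) (A : Ω → Prop) (V : Ω → β) (Z : Ω → γ) : Prop :=
  ∀ v z, pprob p (fun ω => A ω ∧ V ω = v ∧ Z ω = z) * pprob p A
    = pprob p (fun ω => A ω ∧ V ω = v) * pprob p (fun ω => A ω ∧ Z ω = z)

lemma eexp_inter_comp_of_condIndep {β γ : Type*} {V : Ω → β} {Z : Ω → γ}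
    (hind : CondIndep p A V Z) (z : γ) (hA : pprob p A ≠ 0)
    (hAz : pprob p (fun ω => A ω ∧ Z ω = z) ≠ 0) (F : β → ℝ) :
    eexp p (fun ω => A ω ∧ Z ω = z) (fun ω => F (V ω)) = eexp p A (fun ω => F (V ω)) := by
  classical
  have hcomp : ∀ C : Ω → Prop, pexpOn p C (fun ω => F (V ω))
      = ∑ v ∈ Finset.univ.image V, F v * pprob p (fun ω => C ω ∧ V ω = v) := fun C => by
    rw [pexpOn_eq_sum_fiber V]
    refine Finset.sum_congr rfl fun v _ => ?_
    rw [pexpOn_congr (g := fun _ => F v) fun ω hω _ => by rw [hω.2], pexpOn_const]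
  rw [eexp_eq_pexpOn_div, eexp_eq_pexpOn_div, div_eq_div_iff hAz hA, hcomp, hcomp,
    Finset.sum_mul, Finset.sum_mul]
  refine Finset.sum_congr rfl fun v _ => ?_
  have hreorder : (fun ω => (A ω ∧ Z ω = z) ∧ V ω = v) = fun ω => A ω ∧ V ω = v ∧ Z ω = z := by
    ext ω
    tauto
  rw [hreorder, mul_assoc, hind v z, mul_assoc]

end ConditionalExpectation

section LeastSquares

variable {Ω : Type*} [Fintype Ω] {p : Ω → ℝ}

lemma pexp_mul_eq_zero_of_forall_le {r s : Ω → ℝ}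
    (h : ∀ t, pexp p (fun ω => r ω ^ 2) ≤ pexp p (fun ω => (r ω - t * s ω) ^ 2)) :
    pexp p (fun ω => s ω * r ω) = 0 := by
  have hquad : ∀ t, 0 ≤ pexp p (fun ω => s ω ^ 2) * (t * t)
      + (-2 * pexp p (fun ω => s ω * r ω)) * t + 0 := fun t => by
    have hexp : pexp p (fun ω => (r ω - t * s ω) ^ 2) = pexp p (fun ω => r ω ^ 2)
        + (pexp p (fun ω => s ω ^ 2) * (t * t) + (-2 * pexp p (fun ω => s ω * r ω)) * t) := by
      simp only [pexp, Finset.sum_mul, Finset.mul_sum, ← Finset.sum_add_distrib]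
      exact Finset.sum_congr rfl fun ω _ => by ring
    linarith [h t]
  have hdisc := discrim_le_zero hquad
  rw [discrim] at hdisc
  nlinarith [sq_nonneg (pexp p (fun ω => s ω * r ω))]

/-- Frisch–Waugh–Lovell: moving `(b, g)` along `(1, -α)` moves the residual along `Z - X α`, so
the first-order condition in that direction alone determines `b`. -/
lemma mul_pexp_sq_eq_of_isLeastSquares {ι : Type*} [Fintype ι] (X : Ω → ι → ℝ) (Z f : Ω → ℝ)
    (α : ι → ℝ)
    (horth : ∀ v : ι → ℝ, pexp p (fun ω => (Z ω - ∑ j, X ω j * α j) * ∑ j, X ω j * v j) = 0)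
    {b : ℝ} {g : ι → ℝ}
    (hmin : ∀ (b' : ℝ) (g' : ι → ℝ),
      pexp p (fun ω => (f ω - Z ω * b - ∑ j, X ω j * g j) ^ 2) ≤
        pexp p (fun ω => (f ω - Z ω * b' - ∑ j, X ω j * g' j) ^ 2)) :
    b * pexp p (fun ω => (Z ω - ∑ j, X ω j * α j) ^ 2)
      = pexp p (fun ω => (Z ω - ∑ j, X ω j * α j) * f ω) := by
  have hfoc := pexp_mul_eq_zero_of_forall_le (p := p)
    (r := fun ω => f ω - Z ω * b - ∑ j, X ω j * g j) (s := fun ω => Z ω - ∑ j, X ω j * α j)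
    fun t => by
      convert hmin (b + t) (fun j => g j - t * α j) using 3 with ω
      simp only [mul_sub, Finset.sum_sub_distrib, Finset.mul_sum]
      ring_nf
  have hexp : pexp p (fun ω => (Z ω - ∑ j, X ω j * α j) * (f ω - Z ω * b - ∑ j, X ω j * g j))
      = pexp p (fun ω => (Z ω - ∑ j, X ω j * α j) * f ω)
        - b * pexp p (fun ω => (Z ω - ∑ j, X ω j * α j) ^ 2)
        - b * pexp p (fun ω => (Z ω - ∑ j, X ω j * α j) * ∑ j, X ω j * α j)
        - pexp p (fun ω => (Z ω - ∑ j, X ω j * α j) * ∑ j, X ω j * g j) := by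
    unfold pexp
    rw [Finset.mul_sum, Finset.mul_sum, ← Finset.sum_sub_distrib, ← Finset.sum_sub_distrib,
      ← Finset.sum_sub_distrib]
    exact Finset.sum_congr rfl fun ω _ => by ring
  rw [hfoc, horth α, horth g] at hexp
  linarith

end LeastSquares

section TotalExpectation

variable {Ω 𝓧 : Type*} [Fintype Ω] {p : Ω → ℝ}

lemma pexp_eq_pexp_comp_of_condMean (hp0 : ∀ ω, 0 ≤ p ω) (X : Ω → 𝓧) {f : Ω → ℝ} {h : 𝓧 → ℝ}
    (hf : ∀ x, 0 < pprob p (fun ω => X ω = x) → condMean p X f x = h x) :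
    pexp p f = pexp p (fun ω => h (X ω)) := by
  classical
  rw [pexp_eq_sum_fiber X, pexp_eq_sum_fiber X]
  refine Finset.sum_congr rfl fun x _ => ?_
  rcases (pprob_nonneg hp0 fun ω => X ω = x).eq_or_lt with hx | hx
  · rw [pexpOn_eq_zero_of_pprob_eq_zero hp0 hx.symm, pexpOn_eq_zero_of_pprob_eq_zero hp0 hx.symm]
  · rw [pexpOn_congr (f := fun ω => h (X ω)) (g := fun _ => h x) fun ω hω _ => by rw [hω],
      pexpOn_const, ← hf x hx, condMean, eexp_eq_pexpOn_div, div_mul_cancel₀ _ hx.ne']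

lemma pexp_comp_pos (hp : IsProb p) (X : Ω → 𝓧) {h : 𝓧 → ℝ}
    (hh : ∀ x, 0 < pprob p (fun ω => X ω = x) → 0 < h x) : 0 < pexp p (fun ω => h (X ω)) := by
  obtain ⟨hp0, hp1⟩ := hp
  obtain ⟨ω₀, hω₀⟩ : ∃ ω, 0 < p ω := by
    by_contra! hneg
    have : ∑ ω, p ω ≤ 0 := Finset.sum_nonpos fun ω _ => hneg ω
    linarith
  refine Finset.sum_pos' (fun ω _ => ?_) ⟨ω₀, Finset.mem_univ _,
    mul_pos hω₀ (hh _ (pprob_pos_of_pos hp0 rfl hω₀))⟩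
  rcases (hp0 ω).eq_or_lt with hω | hω
  · simp [← hω]
  · exact (mul_pos hω (hh _ (pprob_pos_of_pos hp0 rfl hω))).le

lemma pexp_sub_condMean_mul_comp_eq_zero (hp0 : ∀ ω, 0 ≤ p ω) (X : Ω → 𝓧) {R : Ω → ℝ}
    {m : 𝓧 → ℝ} (hm : ∀ x, 0 < pprob p (fun ω => X ω = x) → condMean p X R x = m x)
    (c : 𝓧 → ℝ) : pexp p (fun ω => (R ω - m (X ω)) * c (X ω)) = 0 := by
  rw [pexp_eq_pexp_comp_of_condMean hp0 X (h := fun _ => 0) fun x hx => ?_]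
  · simp [pexp]
  rw [condMean, eexp_congr (g := fun ω => -(c x * m x) + c x * R ω) fun ω hω _ => by
      rw [hω]; ring, eexp_affine hx.ne', ← condMean, hm x hx]
  ring

end TotalExpectation

section BinaryInstrument

variable {Ω : Type*} [Fintype Ω] {p : Ω → ℝ} {A : Ω → Prop} {Z : Ω → ℝ}

lemma pprob_eq_add_of_binary (hZ : ∀ ω, A ω → Z ω = 0 ∨ Z ω = 1) :
    pprob p A = pprob p (fun ω => A ω ∧ Z ω = 1) + pprob p (fun ω => A ω ∧ Z ω = 0) := by
  simpa [pexpOn_const] using pexpOn_split (p := p) hZ (fun _ => 1) (fun _ => 1)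

lemma eexp_eq_of_binary (hZ : ∀ ω, A ω → Z ω = 0 ∨ Z ω = 1) :
    eexp p A Z = pprob p (fun ω => A ω ∧ Z ω = 1) / pprob p A := by
  simpa [eexp_eq_pexpOn_div, pexpOn_const] using
    congrArg (· / pprob p A) (pexpOn_split (p := p) hZ id (fun _ => 1))

lemma evVar_eq_of_binary (hZ : ∀ ω, A ω → Z ω = 0 ∨ Z ω = 1) (hA : pprob p A ≠ 0) :
    evVar p A Z
      = pprob p (fun ω => A ω ∧ Z ω = 1) * pprob p (fun ω => A ω ∧ Z ω = 0) / pprob p A ^ 2 := by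
  have hvar := pexpOn_split (p := p) hZ (fun z => (z - eexp p A Z) ^ 2) (fun _ => 1)
  simp only [mul_one, pexpOn_const] at hvar
  rw [evVar, eexp_eq_pexpOn_div, hvar, eexp_eq_of_binary hZ]
  rw [pprob_eq_add_of_binary hZ] at hA ⊢
  field_simp
  ring

lemma eexp_centered_mul_of_binary (hZ : ∀ ω, A ω → Z ω = 0 ∨ Z ω = 1)
    (h1 : 0 < pprob p (fun ω => A ω ∧ Z ω = 1)) (h0 : 0 < pprob p (fun ω => A ω ∧ Z ω = 0))
    (f : Ω → ℝ) :
    eexp p A (fun ω => (Z ω - eexp p A Z) * f ω)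
      = evVar p A Z * (eexp p (fun ω => A ω ∧ Z ω = 1) f - eexp p (fun ω => A ω ∧ Z ω = 0) f) := by
  have hS := pprob_eq_add_of_binary (p := p) hZ
  have hA : pprob p A ≠ 0 := by rw [hS]; positivity
  rw [evVar_eq_of_binary hZ hA, eexp_eq_pexpOn_div, pexpOn_split hZ (fun z => z - eexp p A Z) f,
    eexp_eq_of_binary hZ, eexp_eq_pexpOn_div, eexp_eq_pexpOn_div, hS]
  field_simp
  ring

lemma eexp_centered_mul_of_affine {R : Ω → ℝ} (hA : pprob p A ≠ 0) {c s : ℝ}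
    (hR : ∀ ω, A ω → R ω = c + s * Z ω) (f : Ω → ℝ) :
    eexp p A (fun ω => (R ω - eexp p A R) * f ω)
      = s * eexp p A (fun ω => (Z ω - eexp p A Z) * f ω) := by
  have hmean : eexp p A R = c + s * eexp p A Z := by
    rw [eexp_congr fun ω hω _ => hR ω hω, eexp_affine hA]
  rw [hmean, ← eexp_const_mul s (fun ω => (Z ω - eexp p A Z) * f ω)]
  exact eexp_congr fun ω hω _ => by rw [hR ω hω]; ring

lemma pprob_pos_of_cprob_pos {B : Ω → Prop} (hA : 0 < pprob p A) (h : 0 < cprob p B A) :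
    0 < pprob p (fun ω => B ω ∧ A ω) :=
  (div_pos_iff_of_pos_right hA).mp h

lemma pprob_pos_of_cprob_lt_one (hZ : ∀ ω, A ω → Z ω = 0 ∨ Z ω = 1) (hA : 0 < pprob p A)
    (h : cprob p (fun ω => Z ω = 1) A < 1) : 0 < pprob p (fun ω => A ω ∧ Z ω = 0) := by
  rw [cprob, div_lt_one hA, pprob_eq_add_of_binary hZ] at h
  have hcomm : (fun ω => Z ω = 1 ∧ A ω) = fun ω => A ω ∧ Z ω = 1 := by
    ext ω
    exact and_comm
  rw [hcomm] at h
  linarith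

end BinaryInstrument

lemma exists_sign_of_monotone {Ω : Type*} {p : Ω → ℝ} (hp0 : ∀ ω, 0 ≤ p ω) {A : Ω → Prop}
    {D0 D1 : Ω → ℝ}
    (hD0 : ∀ ω, D0 ω = 0 ∨ D0 ω = 1) (hD1 : ∀ ω, D1 ω = 0 ∨ D1 ω = 1)
    (hmono : (∀ ω, 0 < p ω → A ω → D0 ω ≤ D1 ω) ∨ (∀ ω, 0 < p ω → A ω → D1 ω ≤ D0 ω)) :
    ∃ s : ℝ, (s = 1 ∨ s = -1) ∧
      ∀ ω, A ω → p ω ≠ 0 → D1 ω - D0 ω = s * if D1 ω ≠ D0 ω then 1 else 0 := by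
  rcases hmono with hle | hle
  · refine ⟨1, Or.inl rfl, fun ω hA hp => ?_⟩
    have := hle ω ((hp0 ω).lt_of_ne' hp) hA
    rcases hD0 ω with h0 | h0 <;> rcases hD1 ω with h1 | h1 <;>
      first | linarith | norm_num [h0, h1]
  · refine ⟨-1, Or.inr rfl, fun ω hA hp => ?_⟩
    have := hle ω ((hp0 ω).lt_of_ne' hp) hA
    rcases hD0 ω with h0 | h0 <;> rcases hD1 ω with h1 | h1 <;>
      first | linarith | norm_num [h0, h1]

section PotentialOutcomes

variable {Ω 𝓧 : Type*} [Fintype Ω] {p : Ω → ℝ} {X : Ω → 𝓧} {x : 𝓧} {Z : Ω → ℝ}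

lemma cslope_eq_condMean_sub_of_condIndep {β : Type*} {V : Ω → β}
    (hind : CondIndep p (fun ω => X ω = x) V Z) (hx : pprob p (fun ω => X ω = x) ≠ 0)
    (h1 : pprob p (fun ω => X ω = x ∧ Z ω = 1) ≠ 0) (h0 : pprob p (fun ω => X ω = x ∧ Z ω = 0) ≠ 0)
    {f : Ω → ℝ} (F1 F0 : β → ℝ) (hf1 : ∀ ω, Z ω = 1 → f ω = F1 (V ω))
    (hf0 : ∀ ω, Z ω = 0 → f ω = F0 (V ω)) :
    cslope p X Z f x = condMean p X (fun ω => F1 (V ω) - F0 (V ω)) x := by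
  rw [cslope, condMeanOn, condMeanOn, eexp_congr fun ω hω _ => hf1 ω hω.2,
    eexp_congr fun ω hω _ => hf0 ω hω.2, eexp_inter_comp_of_condIndep hind 1 hx h1,
    eexp_inter_comp_of_condIndep hind 0 hx h0, condMean, eexp_sub]

variable {Y0 Y1 D0 D1 : Ω → ℝ}

lemma cslope_treatment_eq
    (hind : CondIndep p (fun ω => X ω = x) (fun ω => (Y0 ω, Y1 ω, D0 ω, D1 ω)) Z)
    (hx : pprob p (fun ω => X ω = x) ≠ 0) (h1 : pprob p (fun ω => X ω = x ∧ Z ω = 1) ≠ 0)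
    (h0 : pprob p (fun ω => X ω = x ∧ Z ω = 0) ≠ 0)
    (hc : pprob p (fun ω => D1 ω ≠ D0 ω ∧ X ω = x) ≠ 0)
    {D : Ω → ℝ} (hD : ∀ ω, D ω = if Z ω = 1 then D1 ω else D0 ω) {s : ℝ}
    (hs : ∀ ω, X ω = x → p ω ≠ 0 → D1 ω - D0 ω = s * if D1 ω ≠ D0 ω then 1 else 0) :
    cslope p X Z D x = s * cprob p (fun ω => D1 ω ≠ D0 ω) (fun ω => X ω = x) := by
  rw [cslope_eq_condMean_sub_of_condIndep hind hx h1 h0 (fun v => v.2.2.2) (fun v => v.2.2.1)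
      (fun ω hz => by rw [hD, if_pos hz]) (fun ω hz => by rw [hD, if_neg (by norm_num [hz])]),
    condMean, eexp_congr hs, eexp_const_mul, eexp_ite_eq_cprob_mul (g := fun _ => 1) _ hc,
    eexp_const hc, mul_one]

lemma cslope_outcome_eq
    (hind : CondIndep p (fun ω => X ω = x) (fun ω => (Y0 ω, Y1 ω, D0 ω, D1 ω)) Z)
    (hx : pprob p (fun ω => X ω = x) ≠ 0) (h1 : pprob p (fun ω => X ω = x ∧ Z ω = 1) ≠ 0)
    (h0 : pprob p (fun ω => X ω = x ∧ Z ω = 0) ≠ 0)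
    (hc : pprob p (fun ω => D1 ω ≠ D0 ω ∧ X ω = x) ≠ 0)
    (hD0 : ∀ ω, D0 ω = 0 ∨ D0 ω = 1) (hD1 : ∀ ω, D1 ω = 0 ∨ D1 ω = 1)
    {D Y : Ω → ℝ} (hD : ∀ ω, D ω = if Z ω = 1 then D1 ω else D0 ω)
    (hY : ∀ ω, Y ω = if D ω = 1 then Y1 ω else Y0 ω) {s : ℝ}
    (hs : ∀ ω, X ω = x → p ω ≠ 0 → D1 ω - D0 ω = s * if D1 ω ≠ D0 ω then 1 else 0) :
    cslope p X Z Y x = s * (cprob p (fun ω => D1 ω ≠ D0 ω) (fun ω => X ω = x) *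
      eexp p (fun ω => D1 ω ≠ D0 ω ∧ X ω = x) (fun ω => Y1 ω - Y0 ω)) := by
  rw [cslope_eq_condMean_sub_of_condIndep hind hx h1 h0
      (fun v => if v.2.2.2 = 1 then v.2.1 else v.1) (fun v => if v.2.2.1 = 1 then v.2.1 else v.1)
      (fun ω hz => by simp [hY, hD, hz]) (fun ω hz => by simp [hY, hD, hz]),
    condMean, ← eexp_ite_eq_cprob_mul _ hc, ← eexp_const_mul]
  refine eexp_congr fun ω hω hp => ?_
  have hsω := hs ω hω hp
  rcases hD0 ω with h0 | h0 <;> rcases hD1 ω with h1 | h1 <;> norm_num [h0, h1] at hsω ⊢ <;>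
    subst hsω <;> ring

end PotentialOutcomes

section ReorderedInstrument

variable {Ω 𝓧 : Type*} [Fintype Ω] {p : Ω → ℝ} {X : Ω → 𝓧} {x : 𝓧} {Z D ZR : Ω → ℝ}

lemma condMean_reordered_mul (hx : 0 < pprob p (fun ω => X ω = x))
    (hZ : ∀ ω, X ω = x → Z ω = 0 ∨ Z ω = 1) (h1 : 0 < pprob p (fun ω => X ω = x ∧ Z ω = 1))
    (h0 : 0 < pprob p (fun ω => X ω = x ∧ Z ω = 0))
    (hZR : ∀ ω, ZR ω =
      (if 0 < cslope p X Z D (X ω) then (1:ℝ) else 0) * Z ω +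
        (if cslope p X Z D (X ω) < 0 then (1:ℝ) else 0) * (1 - Z ω))
    {s c : ℝ} (hs : s = 1 ∨ s = -1) (hc : 0 < c) (hslope : cslope p X Z D x = s * c)
    (f : Ω → ℝ) :
    condMean p X (fun ω => (ZR ω - condMean p X ZR x) * f ω) x
      = s * (condVar p X Z x * cslope p X Z f x) := by
  obtain ⟨a, hR⟩ : ∃ a, ∀ ω, X ω = x → ZR ω = a + s * Z ω := by
    rcases hs with rfl | rfl
    · exact ⟨0, fun ω hω => by simp [hZR, hω, hslope, hc, hc.not_gt]⟩
    · exact ⟨1, fun ω hω => by simp [hZR, hω, hslope, hc, hc.not_gt]; ring⟩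
  exact (eexp_centered_mul_of_affine hx.ne' hR f).trans
    (congrArg (s * ·) (eexp_centered_mul_of_binary hZ h1 h0 f))

lemma reorderedIV_cell (hp0 : ∀ ω, 0 ≤ p ω) {D0 D1 Y0 Y1 D Y : Ω → ℝ}
    (hZ : ∀ ω, Z ω = 0 ∨ Z ω = 1)
    (hD0 : ∀ ω, D0 ω = 0 ∨ D0 ω = 1) (hD1 : ∀ ω, D1 ω = 0 ∨ D1 ω = 1)
    (hind : CondIndep p (fun ω => X ω = x) (fun ω => (Y0 ω, Y1 ω, D0 ω, D1 ω)) Z)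
    (hx : 0 < pprob p (fun ω => X ω = x))
    (hrel : 0 < cprob p (fun ω => Z ω = 1) (fun ω => X ω = x) ∧
      cprob p (fun ω => Z ω = 1) (fun ω => X ω = x) < 1 ∧
      0 < cprob p (fun ω => D1 ω ≠ D0 ω) (fun ω => X ω = x))
    (hmono : (∀ ω, 0 < p ω → X ω = x → D0 ω ≤ D1 ω) ∨ (∀ ω, 0 < p ω → X ω = x → D1 ω ≤ D0 ω))
    (hD : ∀ ω, D ω = if Z ω = 1 then D1 ω else D0 ω)
    (hY : ∀ ω, Y ω = if D ω = 1 then Y1 ω else Y0 ω)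
    (hZR : ∀ ω, ZR ω =
      (if 0 < cslope p X Z D (X ω) then (1:ℝ) else 0) * Z ω +
        (if cslope p X Z D (X ω) < 0 then (1:ℝ) else 0) * (1 - Z ω))
    {μ : 𝓧 → ℝ} (hμ : condMean p X ZR x = μ x) :
    condMean p X (fun ω => (ZR ω - μ (X ω)) * Y ω) x
        = cprob p (fun ω => D1 ω ≠ D0 ω) (fun ω => X ω = x) * condVar p X Z x *
          eexp p (fun ω => D1 ω ≠ D0 ω ∧ X ω = x) (fun ω => Y1 ω - Y0 ω) ∧
      condMean p X (fun ω => (ZR ω - μ (X ω)) * D ω) x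
        = cprob p (fun ω => D1 ω ≠ D0 ω) (fun ω => X ω = x) * condVar p X Z x ∧
      0 < cprob p (fun ω => D1 ω ≠ D0 ω) (fun ω => X ω = x) * condVar p X Z x := by
  obtain ⟨hq0, hq1, hc⟩ := hrel
  have h1 : 0 < pprob p (fun ω => X ω = x ∧ Z ω = 1) := by
    simpa only [and_comm] using pprob_pos_of_cprob_pos hx hq0
  have h0 := pprob_pos_of_cprob_lt_one (fun ω _ => hZ ω) hx hq1
  have hc' := pprob_pos_of_cprob_pos hx hc
  obtain ⟨s, hs, hsign⟩ := exists_sign_of_monotone hp0 hD0 hD1 hmono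
  have hslopeD := cslope_treatment_eq hind hx.ne' h1.ne' h0.ne' hc'.ne' hD hsign
  have hslopeY := cslope_outcome_eq hind hx.ne' h1.ne' h0.ne' hc'.ne' hD0 hD1 hD hY hsign
  have hW : ∀ f, condMean p X (fun ω => (ZR ω - μ (X ω)) * f ω) x
      = s * (condVar p X Z x * cslope p X Z f x) := fun f => by
    rw [← condMean_reordered_mul hx (fun ω _ => hZ ω) h1 h0 hZR hs hc hslopeD f, hμ]
    exact eexp_congr fun ω hω _ => by rw [hω]
  have hss : s * s = 1 := by rcases hs with rfl | rfl <;> norm_num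
  refine ⟨?_, ?_, mul_pos hc ?_⟩
  · rw [hW, hslopeY]
    linear_combination (cprob p (fun ω => D1 ω ≠ D0 ω) (fun ω => X ω = x) * condVar p X Z x *
      eexp p (fun ω => D1 ω ≠ D0 ω ∧ X ω = x) (fun ω => Y1 ω - Y0 ω)) * hss
  · rw [hW, hslopeD]
    linear_combination (cprob p (fun ω => D1 ω ≠ D0 ω) (fun ω => X ω = x) * condVar p X Z x) * hss
  · rw [condVar, evVar_eq_of_binary (fun ω _ => hZ ω) hx.ne']
    positivity

end ReorderedInstrument

/-- Theorem 3, reordered IV: under Assumption IV, weak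
monotonicity, and linearity of `E[Z_R | X]` in `X`, the reordered IV estimand
satisfies `β_RIV = E[π(X)·Var[Z|X]·τ(X)] / E[π(X)·Var[Z|X]]`, a convex
combination of the conditional LATEs. -/
theorem stmt11 {Ω : Type*} [Fintype Ω] {k : ℕ} (p : Ω → ℝ) (hp : IsProb p)
    (X : Ω → Fin k → ℝ) (Z D0 D1 Y0 Y1 : Ω → ℝ)
    (hZ : ∀ ω, Z ω = 0 ∨ Z ω = 1)
    (hD0 : ∀ ω, D0 ω = 0 ∨ D0 ω = 1) (hD1 : ∀ ω, D1 ω = 0 ∨ D1 ω = 1)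
    (hindep : ∀ (x : Fin k → ℝ) (y0 y1 d0 d1 z : ℝ),
      pprob p (fun ω => X ω = x ∧ Y0 ω = y0 ∧ Y1 ω = y1 ∧ D0 ω = d0 ∧ D1 ω = d1 ∧ Z ω = z) *
          pprob p (fun ω => X ω = x)
        = pprob p (fun ω => X ω = x ∧ Y0 ω = y0 ∧ Y1 ω = y1 ∧ D0 ω = d0 ∧ D1 ω = d1) *
            pprob p (fun ω => X ω = x ∧ Z ω = z))
    (hrel : ∀ x : Fin k → ℝ, 0 < pprob p (fun ω => X ω = x) →
      0 < cprob p (fun ω => Z ω = 1) (fun ω => X ω = x) ∧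
      cprob p (fun ω => Z ω = 1) (fun ω => X ω = x) < 1 ∧
      0 < cprob p (fun ω => D1 ω ≠ D0 ω) (fun ω => X ω = x))
    (hmono : ∀ x : Fin k → ℝ,
      (∀ ω, 0 < p ω → X ω = x → D0 ω ≤ D1 ω) ∨
      (∀ ω, 0 < p ω → X ω = x → D1 ω ≤ D0 ω))
    (D Y : Ω → ℝ)
    (hD : ∀ ω, D ω = if Z ω = 1 then D1 ω else D0 ω)
    (hY : ∀ ω, Y ω = if D ω = 1 then Y1 ω else Y0 ω)
    -- the reordered instrument
    (ZR : Ω → ℝ)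
    (hZR : ∀ ω, ZR ω =
      (if 0 < cslope p X Z D (X ω) then (1:ℝ) else 0) * Z ω +
        (if cslope p X Z D (X ω) < 0 then (1:ℝ) else 0) * (1 - Z ω))
    -- linearity of E[Z_R | X] in X
    (αR : Fin k → ℝ)
    (hlinR : ∀ x : Fin k → ℝ, 0 < pprob p (fun ω => X ω = x) →
      condMean p X ZR x = ∑ j, x j * αR j)
    -- β_RIV as the ratio of the reduced-form and first-stage coefficients on Z_R
    (bY : ℝ) (gY : Fin k → ℝ)
    (hbY : ∀ (b' : ℝ) (g' : Fin k → ℝ),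
      pexp p (fun ω => (Y ω - ZR ω * bY - ∑ j, X ω j * gY j) ^ 2) ≤
        pexp p (fun ω => (Y ω - ZR ω * b' - ∑ j, X ω j * g' j) ^ 2))
    (bD : ℝ) (gD : Fin k → ℝ)
    (hbD : ∀ (b' : ℝ) (g' : Fin k → ℝ),
      pexp p (fun ω => (D ω - ZR ω * bD - ∑ j, X ω j * gD j) ^ 2) ≤
        pexp p (fun ω => (D ω - ZR ω * b' - ∑ j, X ω j * g' j) ^ 2)) :
    bY / bD =
      pexp p (fun ω =>
          cprob p (fun ω' => D1 ω' ≠ D0 ω') (fun ω' => X ω' = X ω) *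
            condVar p X Z (X ω) *
            eexp p (fun ω' => D1 ω' ≠ D0 ω' ∧ X ω' = X ω) (fun ω' => Y1 ω' - Y0 ω')) /
        pexp p (fun ω =>
          cprob p (fun ω' => D1 ω' ≠ D0 ω') (fun ω' => X ω' = X ω) *
            condVar p X Z (X ω)) := by
  have hp0 := hp.1
  have hindV : ∀ x, CondIndep p (fun ω => X ω = x) (fun ω => (Y0 ω, Y1 ω, D0 ω, D1 ω)) Z := by
    rintro x ⟨y0, y1, d0, d1⟩ z
    simpa only [Prod.mk.injEq, and_assoc] using hindep x y0 y1 d0 d1 z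
  have hcell := fun x hx => reorderedIV_cell hp0 hZ hD0 hD1 (hindV x) hx (hrel x hx) (hmono x)
    hD hY hZR (μ := fun x => ∑ j, x j * αR j) (hlinR x hx)
  have horth : ∀ v : Fin k → ℝ,
      pexp p (fun ω => (ZR ω - ∑ j, X ω j * αR j) * ∑ j, X ω j * v j) = 0 := fun v =>
    pexp_sub_condMean_mul_comp_eq_zero hp0 X hlinR (fun x => ∑ j, x j * v j)
  have hYeq := mul_pexp_sq_eq_of_isLeastSquares X ZR Y αR horth hbY
  have hDeq := mul_pexp_sq_eq_of_isLeastSquares X ZR D αR horth hbD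
  rw [pexp_eq_pexp_comp_of_condMean hp0 X fun x hx => (hcell x hx).1] at hYeq
  rw [pexp_eq_pexp_comp_of_condMean hp0 X fun x hx => (hcell x hx).2.1] at hDeq
  have hden := pexp_comp_pos hp X fun x hx => (hcell x hx).2.2
  have hbD : bD ≠ 0 := by
    rintro rfl
    rw [zero_mul] at hDeq
    exact hden.ne hDeq
  rw [div_eq_div_iff hbD hden.ne', ← hYeq, ← hDeq]
  ring
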